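/- Let M be a smooth manifold and let C^∞_c(M,ℂ) be the non-unital algebra of compactly supported smooth complex-valued functions on M. Then every nonzero (non-unital) ℂ-algebra homomorphism η : C^∞_c(M,ℂ) → ℂ is evaluation at a point: there exists a unique x ∈ M such that η(f) = f(x) for all f ∈ C^∞_c(M,ℂ). -/

import Mathlib

/-!
The kernel of `η` has a common zero `x`. Otherwise pick `g` with `η g ≠ 0` and, for every point,
a kernel element not vanishing there; by compactness of `tsupport g` finitely many `Fᵢ` suffice,
and `h = ∑ Fᵢ * conj Fᵢ` lies in the kernel and does not vanish on `tsupport g`. Then `g / h` is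
smooth with compact support, so `g = (g / h) * h` lies in the kernel too: a contradiction.
Two characters with nested kernels coincide, so `η = ε_x`; bump functions separate points.
-/

open Bundle Manifold
open scoped TensorProduct

local notation "∞" => (⊤ : ℕ∞)

noncomputable section

/-- Complex multiplication and addition are smooth over `ℝ`, so that the complex-valued smooth
functions on a real manifold form a (comm)ring. -/
instance : ContMDiffRing 𝓘(ℝ, ℂ) (⊤ : ℕ∞) ℂ where
  contMDiff_add := by
    rw [contMDiff_iff]
    refine ⟨continuous_add, fun x y => ?_⟩
    simp only [mfld_simps, chartAt_self_eq]
    rw [contDiffOn_univ]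
    exact contDiff_add
  contMDiff_mul := by
    rw [contMDiff_iff]
    refine ⟨continuous_mul, fun x y => ?_⟩
    simp only [mfld_simps, chartAt_self_eq]
    rw [contDiffOn_univ]
    exact contDiff_mul

variable {EM : Type*} [NormedAddCommGroup EM] [NormedSpace ℝ EM] [FiniteDimensional ℝ EM]
  {HM : Type*} [TopologicalSpace HM] {IM : ModelWithCorners ℝ EM HM}
  {M : Type*} [TopologicalSpace M] [ChartedSpace HM M] [IsManifold IM (⊤ : ℕ∞) M]
  [T2Space M] [SecondCountableTopology M]

/-- The constant functions make the smooth complex-valued functions a `ℂ`-algebra. -/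
instance : Algebra ℂ C^∞⟮IM, M; 𝓘(ℝ, ℂ), ℂ⟯ :=
  RingHom.toAlgebra
    { toFun := fun c => ⟨fun _ => c, contMDiff_const⟩
      map_one' := rfl
      map_mul' := fun _ _ => rfl
      map_zero' := rfl
      map_add' := fun _ _ => rfl }

/-- The non-unital subalgebra of compactly supported smooth complex-valued functions. -/
def SmoothMap.compactlySupported (IM : ModelWithCorners ℝ EM HM) (M : Type*) [TopologicalSpace M]
    [ChartedSpace HM M] [IsManifold IM (⊤ : ℕ∞) M] :
    NonUnitalSubalgebra ℂ C^∞⟮IM, M; 𝓘(ℝ, ℂ), ℂ⟯ where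
  carrier := {f | HasCompactSupport (f : M → ℂ)}
  add_mem' hf hg := hf.add hg
  zero_mem' := by
    simpa only [Set.mem_ofPred_eq, ContMDiffMap.coe_zero] using (HasCompactSupport.zero : HasCompactSupport (0 : M → ℂ))
  mul_mem' hf hg := hf.mul_right
  smul_mem' c f hf := hf.mul_left

open Topology

namespace NonUnitalAlgHom

variable {𝕜 A : Type*} [Field 𝕜] [NonUnitalRing A] [Module 𝕜 A]

theorem eq_of_ker_le {φ ψ : A →ₙₐ[𝕜] 𝕜} (hφ : φ ≠ 0)
    (hker : TwoSidedIdeal.ker ψ ≤ TwoSidedIdeal.ker φ) : φ = ψ := by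
  have hker' (a : A) (ha : ψ a = 0) : φ a = 0 :=
    (TwoSidedIdeal.mem_ker φ).1 (hker ((TwoSidedIdeal.mem_ker ψ).2 ha))
  obtain ⟨a, ha⟩ : ∃ a, ψ a ≠ 0 := by
    by_contra! hψ
    exact hφ (ext fun a => hker' a (hψ a))
  set g := (ψ a)⁻¹ • a
  have hg : ψ g = 1 := by rw [map_smul, smul_eq_mul, inv_mul_cancel₀ ha]
  have hφ_eq (f : A) : φ f = ψ f * φ g := by
    have := hker' (f - ψ f • g) (by rw [map_sub, map_smul, hg, smul_eq_mul, mul_one, sub_self])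
    rwa [map_sub, map_smul, smul_eq_mul, sub_eq_zero] at this
  have hφg_ne : φ g ≠ 0 := fun h0 => hφ (ext fun f => by rw [hφ_eq, h0, mul_zero, zero_apply])
  have hφg : φ g = 1 := by
    refine mul_left_cancel₀ hφg_ne ?_
    rw [mul_one, ← map_mul, hφ_eq, map_mul, hg, one_mul, one_mul]
  ext f
  rw [hφ_eq, hφg, mul_one]

end NonUnitalAlgHom

namespace SmoothMap.compactlySupported

section

omit [FiniteDimensional ℝ EM] [T2Space M] [SecondCountableTopology M]

def eval (x : M) : SmoothMap.compactlySupported IM M →ₙₐ[ℂ] ℂ where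
  toFun f := (f : C^∞⟮IM, M; 𝓘(ℝ, ℂ), ℂ⟯) x
  map_smul' _ _ := rfl
  map_zero' := rfl
  map_add' _ _ := rfl
  map_mul' _ _ := rfl

theorem eval_apply (x : M) (f : SmoothMap.compactlySupported IM M) :
    eval x f = (f : C^∞⟮IM, M; 𝓘(ℝ, ℂ), ℂ⟯) x :=
  rfl

def conj (f : SmoothMap.compactlySupported IM M) : SmoothMap.compactlySupported IM M :=
  ⟨⟨fun y => starRingEnd ℂ ((f : C^∞⟮IM, M; 𝓘(ℝ, ℂ), ℂ⟯) y),
    Complex.conjCLE.contDiff.contMDiff.comp f.1.contMDiff⟩,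
    HasCompactSupport.comp_left (g := starRingEnd ℂ) f.2 (map_zero _)⟩

theorem eval_conj (x : M) (f : SmoothMap.compactlySupported IM M) :
    eval x (conj f) = starRingEnd ℂ (eval x f) :=
  rfl

theorem exists_map_eq_zero_forall_mem_eval_ne_zero (η : SmoothMap.compactlySupported IM M →ₙₐ[ℂ] ℂ)
    (hker : ∀ x, ∃ f, η f = 0 ∧ eval x f ≠ 0) {K : Set M} (hK : IsCompact K) :
    ∃ h, η h = 0 ∧ ∀ y ∈ K, eval y h ≠ 0 := by
  choose F hF0 hFx using hker
  obtain ⟨t, ht⟩ := hK.elim_finite_subcover (fun x => {y | eval y (F x) ≠ 0})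
    (fun x => isOpen_ne.preimage (map_continuous (F x : C^∞⟮IM, M; 𝓘(ℝ, ℂ), ℂ⟯)))
    (fun y _ => Set.mem_iUnion.2 ⟨y, hFx y⟩)
  refine ⟨∑ i ∈ t, F i * conj (F i), by simp [map_sum, hF0], fun y hy => ?_⟩
  obtain ⟨i, hit, hi⟩ := Set.mem_iUnion₂.1 (ht hy)
  have hpos : 0 < ∑ i ∈ t, Complex.normSq (eval y (F i)) :=
    Finset.sum_pos' (fun _ _ => Complex.normSq_nonneg _) ⟨i, hit, Complex.normSq_pos.2 hi⟩
  simp only [map_sum, map_mul, eval_conj, Complex.mul_conj]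
  exact_mod_cast hpos.ne'

theorem exists_eq_mul_of_forall_mem_tsupport (g h : SmoothMap.compactlySupported IM M)
    (hh : ∀ y ∈ tsupport ((g : C^∞⟮IM, M; 𝓘(ℝ, ℂ), ℂ⟯) : M → ℂ), eval y h ≠ 0) :
    ∃ u, g = u * h := by
  set g' : M → ℂ := ⇑(g : C^∞⟮IM, M; 𝓘(ℝ, ℂ), ℂ⟯)
  set h' : M → ℂ := ⇑(h : C^∞⟮IM, M; 𝓘(ℝ, ℂ), ℂ⟯)
  have hsupp : Function.support (g' / h') ⊆ Function.support g' := by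
    rw [Function.support_div']
    exact Set.inter_subset_left
  have hsmooth : ContMDiff IM 𝓘(ℝ, ℂ) ∞ (g' / h') := contMDiff_of_tsupport fun y hy =>
    (g.1.contMDiff y).mul
      ((contDiffAt_inv ℝ (hh y (closure_mono hsupp hy))).contMDiffAt.comp y (h.1.contMDiff y))
  refine ⟨⟨⟨g' / h', hsmooth⟩, g.2.mono' (hsupp.trans subset_closure)⟩,
    Subtype.ext (ContMDiffMap.ext fun y => ?_)⟩
  show g' y = g' y / h' y * h' y
  by_cases hy : h' y = 0
  · rw [hy, mul_zero]
    exact image_eq_zero_of_notMem_tsupport fun hyg => hh y hyg hy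
  · exact (div_mul_cancel₀ _ hy).symm

theorem exists_ker_le_ker_eval (η : SmoothMap.compactlySupported IM M →ₙₐ[ℂ] ℂ) (hη : η ≠ 0) :
    ∃ x, TwoSidedIdeal.ker η ≤ TwoSidedIdeal.ker (eval x) := by
  simp only [TwoSidedIdeal.le_iff, Set.subset_def, SetLike.mem_coe, TwoSidedIdeal.mem_ker]
  by_contra! hker
  obtain ⟨g, hg⟩ : ∃ g, η g ≠ 0 := by
    by_contra! h
    exact hη (NonUnitalAlgHom.ext h)
  obtain ⟨h, hh0, hh⟩ := exists_map_eq_zero_forall_mem_eval_ne_zero η hker g.2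
  obtain ⟨u, rfl⟩ := exists_eq_mul_of_forall_mem_tsupport g h hh
  exact hg (by rw [map_mul, hh0, mul_zero])

end

section

omit [SecondCountableTopology M]

theorem exists_eval_eq_one_of_mem_nhds {x : M} {s : Set M} (hs : s ∈ 𝓝 x) :
    ∃ f : SmoothMap.compactlySupported IM M, eval x f = 1 ∧ ∀ y ∉ s, eval y f = 0 := by
  obtain ⟨b, -, hb⟩ := (SmoothBumpFunction.nhds_basis_tsupport (I := IM) x).mem_iff.1 hs
  refine ⟨⟨⟨fun y => (b y : ℂ), Complex.ofRealCLM.contDiff.contMDiff.comp b.contMDiff⟩,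
    b.hasCompactSupport.comp_left Complex.ofReal_zero⟩, ?_, fun y hy => ?_⟩
  · show ((b x : ℝ) : ℂ) = 1
    rw [b.eq_one, Complex.ofReal_one]
  · show ((b y : ℝ) : ℂ) = 0
    rw [image_eq_zero_of_notMem_tsupport fun h => hy (hb h), Complex.ofReal_zero]

theorem eval_ne_zero (x : M) : eval (IM := IM) x ≠ 0 := fun h => by
  obtain ⟨f, hf, -⟩ := exists_eval_eq_one_of_mem_nhds (IM := IM) (Filter.univ_mem (f := 𝓝 x))
  simp [h] at hf

theorem eval_injective : Function.Injective (eval (IM := IM) (M := M)) := fun x y hxy => by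
  by_contra hne
  obtain ⟨f, hfx, hfy⟩ := exists_eval_eq_one_of_mem_nhds (IM := IM) (isOpen_ne.mem_nhds hne)
  have := hfy y (fun h => h rfl)
  rw [← hxy, hfx] at this
  exact one_ne_zero this

end

end SmoothMap.compactlySupported

open SmoothMap.compactlySupported

theorem nonUnitalAlgHom_eq_eval
    (η : SmoothMap.compactlySupported IM M →ₙₐ[ℂ] ℂ) (hη : η ≠ 0) :
    ∃! x : M, ∀ f : SmoothMap.compactlySupported IM M, η f = (f : C^∞⟮IM, M; 𝓘(ℝ, ℂ), ℂ⟯) x := by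
  obtain ⟨x, hx⟩ := exists_ker_le_ker_eval η hη
  have hηx : eval x = η := NonUnitalAlgHom.eq_of_ker_le (eval_ne_zero x) hx
  refine ⟨x, fun f => by rw [← hηx, eval_apply], fun y hy => eval_injective (IM := IM) ?_⟩
  rw [hηx]
  exact NonUnitalAlgHom.ext fun f => (hy f).symm

end
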